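/- arXiv:2002.08044 — 8 statements merged into one kernel-verified Lean document; each statement's English description precedes it below -/
import Mathlib

section
/- Let z, x̃ ∈ ℝ^N with F(z) < ∞, let β, ε, C, A_max > 0 and w ∈ (0, 1] with β ≥ 2wC·A_max + ε, and set z' := (1 − w)z + w·x̃. Define A_z(x) := A(z) + A'(z)(x − z), J_z(x) := (1/2)‖A_z(x)‖² + F(x), and J̃_z(x) := J_z(x) + (β/2)‖x − z‖². If J̃_z(x̃) ≤ J̃_z(z), ‖A(z') − A_z(z')‖ ≤ C‖z' − z‖², and ‖A(z')‖ ≤ A_max, then J(z) − J(z') ≥ (wε/2)‖z − x̃‖² (the per-iteration sufficient-decrease inequality (2.10)). -/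
/-!
Since `A_z` is affine and both `F` and `‖·‖²` are convex, the model value at `z' = (1 - w)z + w x̃`
satisfies `J_z(z') ≤ (1 - w) J(z) + w J_z(x̃)`, and the prox decrease `J̃_z(x̃) ≤ J̃_z(z) = J(z)`
turns this into `J_z(z') ≤ J(z) - (wβ/2)‖x̃ - z‖²`. Replacing `A_z(z')` by `A(z')` costs at most
`‖A(z')‖ ‖A(z') - A_z(z')‖ ≤ A_max C w² ‖x̃ - z‖²` in `(1/2)‖A(z')‖²`, and `β ≥ 2wC A_max + ε`
leaves the decrease `(wε/2)‖x̃ - z‖²`.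
-/

open scoped RealInnerProductSpace

/-- The objective `J(x) = (1/2)‖A(x)‖² + F(x)` with extended-real-valued `F`. -/
noncomputable def Jobj {N M : ℕ} (F : EuclideanSpace ℝ (Fin N) → EReal)
    (A : EuclideanSpace ℝ (Fin N) → EuclideanSpace ℝ (Fin M))
    (x : EuclideanSpace ℝ (Fin N)) : EReal :=
  ((1 / 2 * ‖A x‖ ^ 2 : ℝ) : EReal) + F x

/-- The linearisation `A_z(x) = A(z) + A'(z)(x − z)`. -/
noncomputable def Alin {N M : ℕ}
    (A : EuclideanSpace ℝ (Fin N) → EuclideanSpace ℝ (Fin M))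
    (A' : EuclideanSpace ℝ (Fin N) → (EuclideanSpace ℝ (Fin N) →L[ℝ] EuclideanSpace ℝ (Fin M)))
    (z x : EuclideanSpace ℝ (Fin N)) : EuclideanSpace ℝ (Fin M) :=
  A z + A' z (x - z)

/-- The linearised objective `J_z(x) = (1/2)‖A_z(x)‖² + F(x)`. -/
noncomputable def Jlin {N M : ℕ} (F : EuclideanSpace ℝ (Fin N) → EReal)
    (A : EuclideanSpace ℝ (Fin N) → EuclideanSpace ℝ (Fin M))
    (A' : EuclideanSpace ℝ (Fin N) → (EuclideanSpace ℝ (Fin N) →L[ℝ] EuclideanSpace ℝ (Fin M)))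
    (z x : EuclideanSpace ℝ (Fin N)) : EReal :=
  ((1 / 2 * ‖Alin A A' z x‖ ^ 2 : ℝ) : EReal) + F x

/-- The proximally relaxed linearised objective `J̃_z(x) = J_z(x) + (β/2)‖x − z‖²`. -/
noncomputable def Jprox {N M : ℕ} (F : EuclideanSpace ℝ (Fin N) → EReal)
    (A : EuclideanSpace ℝ (Fin N) → EuclideanSpace ℝ (Fin M))
    (A' : EuclideanSpace ℝ (Fin N) → (EuclideanSpace ℝ (Fin N) →L[ℝ] EuclideanSpace ℝ (Fin M)))
    (β : ℝ) (z x : EuclideanSpace ℝ (Fin N)) : EReal :=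
  Jlin F A A' z x + ((β / 2 * ‖x - z‖ ^ 2 : ℝ) : EReal)

theorem norm_sq_le_norm_sq_add_two_mul_norm_mul_norm_sub {E : Type*} [SeminormedAddCommGroup E]
    (a b : E) : ‖a‖ ^ 2 ≤ ‖b‖ ^ 2 + 2 * ‖a‖ * ‖a - b‖ := by
  have hab : ‖a‖ ≤ ‖b‖ + ‖a - b‖ := norm_le_insert' a b
  nlinarith [sq_nonneg (‖a‖ - ‖b‖), norm_nonneg a]

theorem norm_sq_le_norm_sq_add_of_norm_le_of_norm_sub_le {E : Type*} [SeminormedAddCommGroup E]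
    {a b : E} {R δ : ℝ} (ha : ‖a‖ ≤ R) (hab : ‖a - b‖ ≤ δ) :
    ‖a‖ ^ 2 ≤ ‖b‖ ^ 2 + 2 * R * δ := by
  have := mul_le_mul ha hab (norm_nonneg _) ((norm_nonneg a).trans ha)
  linarith [norm_sq_le_norm_sq_add_two_mul_norm_mul_norm_sub a b]

theorem norm_sq_convex_comb_le {E : Type*} [SeminormedAddCommGroup E] [NormedSpace ℝ E]
    (u v : E) {w : ℝ} (hw0 : 0 ≤ w) (hw1 : w ≤ 1) :
    ‖(1 - w) • u + w • v‖ ^ 2 ≤ (1 - w) * ‖u‖ ^ 2 + w * ‖v‖ ^ 2 := by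
  have htri : ‖(1 - w) • u + w • v‖ ≤ (1 - w) * ‖u‖ + w * ‖v‖ := by
    refine (norm_add_le _ _).trans_eq ?_
    rw [norm_smul, norm_smul, Real.norm_of_nonneg (sub_nonneg.2 hw1), Real.norm_of_nonneg hw0]
  have hsq : ((1 - w) * ‖u‖ + w * ‖v‖) ^ 2 ≤ (1 - w) * ‖u‖ ^ 2 + w * ‖v‖ ^ 2 := by
    nlinarith [mul_nonneg (mul_nonneg hw0 (sub_nonneg.2 hw1)) (sq_nonneg (‖u‖ - ‖v‖))]
  exact (pow_le_pow_left₀ (norm_nonneg _) htri 2).trans hsq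

section Linearisation

variable {N M : ℕ} (F : EuclideanSpace ℝ (Fin N) → EReal)
  (A : EuclideanSpace ℝ (Fin N) → EuclideanSpace ℝ (Fin M))
  (A' : EuclideanSpace ℝ (Fin N) → (EuclideanSpace ℝ (Fin N) →L[ℝ] EuclideanSpace ℝ (Fin M)))

theorem Alin_self (z : EuclideanSpace ℝ (Fin N)) : Alin A A' z z = A z := by
  simp [Alin]

theorem Alin_convex_comb (z x : EuclideanSpace ℝ (Fin N)) (w : ℝ) :
    Alin A A' z ((1 - w) • z + w • x) = (1 - w) • A z + w • Alin A A' z x := by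
  have : (1 - w) • z + w • x - z = w • (x - z) := by module
  rw [Alin, Alin, this, map_smul]
  module

theorem Jprox_self (β : ℝ) (z : EuclideanSpace ℝ (Fin N)) :
    Jprox F A A' β z z = Jobj F A z := by
  simp [Jprox, Jlin, Jobj, Alin_self]

theorem half_norm_sq_convex_comb_le {z x z' : EuclideanSpace ℝ (Fin N)} {w C R : ℝ}
    (hw0 : 0 ≤ w) (hw1 : w ≤ 1) (hz' : z' = (1 - w) • z + w • x)
    (herr : ‖A z' - Alin A A' z z'‖ ≤ C * ‖z' - z‖ ^ 2) (hbnd : ‖A z'‖ ≤ R) :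
    1 / 2 * ‖A z'‖ ^ 2 ≤ (1 - w) * (1 / 2 * ‖A z‖ ^ 2) + w * (1 / 2 * ‖Alin A A' z x‖ ^ 2)
      + w ^ 2 * R * C * ‖x - z‖ ^ 2 := by
  have hstep : ‖z' - z‖ ^ 2 = w ^ 2 * ‖x - z‖ ^ 2 := by
    rw [show z' - z = w • (x - z) by rw [hz']; module, norm_smul, Real.norm_of_nonneg hw0]
    ring
  have hlin : ‖Alin A A' z z'‖ ^ 2 ≤ (1 - w) * ‖A z‖ ^ 2 + w * ‖Alin A A' z x‖ ^ 2 := by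
    rw [hz', Alin_convex_comb]
    exact norm_sq_convex_comb_le _ _ hw0 hw1
  have hAz' := norm_sq_le_norm_sq_add_of_norm_le_of_norm_sub_le hbnd (hstep ▸ herr)
  linarith

theorem F_ne_top_of_Jprox_le_coe {β r : ℝ} {z x : EuclideanSpace ℝ (Fin N)}
    (h : Jprox F A A' β z x ≤ r) : F x ≠ ⊤ := fun htop => by
  rw [Jprox, Jlin, htop, EReal.coe_add_top, EReal.top_add_coe, top_le_iff] at h
  exact EReal.coe_ne_top _ h

end Linearisation

theorem stmt_4_general {N M : ℕ}
    (F : EuclideanSpace ℝ (Fin N) → EReal)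
    (A : EuclideanSpace ℝ (Fin N) → EuclideanSpace ℝ (Fin M))
    (A' : EuclideanSpace ℝ (Fin N) → (EuclideanSpace ℝ (Fin N) →L[ℝ] EuclideanSpace ℝ (Fin M)))
    (hFconv : ∀ x y : EuclideanSpace ℝ (Fin N), ∀ a b : ℝ, 0 ≤ a → 0 ≤ b → a + b = 1 →
      F (a • x + b • y) ≤ (a : EReal) * F x + (b : EReal) * F y)
    (hFnebot : ∀ x, F x ≠ ⊥)
    (z xt : EuclideanSpace ℝ (Fin N)) (hz : F z < ⊤)
    (β ε C Amax w : ℝ)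
    (hw : w ∈ Set.Ioc (0 : ℝ) 1)
    (hβw : 2 * w * C * Amax + ε ≤ β)
    (z' : EuclideanSpace ℝ (Fin N)) (hz' : z' = (1 - w) • z + w • xt)
    (hdec : Jprox F A A' β z xt ≤ Jprox F A A' β z z)
    (herr : ‖A z' - Alin A A' z z'‖ ≤ C * ‖z' - z‖ ^ 2)
    (hbnd : ‖A z'‖ ≤ Amax) :
    Jobj F A z' + ((w * ε / 2 * ‖z - xt‖ ^ 2 : ℝ) : EReal) ≤ Jobj F A z := by
  obtain ⟨hw0, hw1⟩ := hw
  obtain ⟨fz, hfz⟩ : ∃ r : ℝ, F z = r := ⟨_, (EReal.coe_toReal hz.ne (hFnebot z)).symm⟩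
  rw [Jprox_self, Jobj, hfz, ← EReal.coe_add] at hdec
  obtain ⟨fxt, hfxt⟩ : ∃ r : ℝ, F xt = r :=
    ⟨_, (EReal.coe_toReal (F_ne_top_of_Jprox_le_coe F A A' hdec) (hFnebot xt)).symm⟩
  have hmodel :
      1 / 2 * ‖Alin A A' z xt‖ ^ 2 + fxt + β / 2 * ‖xt - z‖ ^ 2 ≤ 1 / 2 * ‖A z‖ ^ 2 + fz := by
    rw [Jprox, Jlin, hfxt] at hdec
    exact_mod_cast hdec
  have hF : F z' ≤ ((1 - w) * fz + w * fxt : ℝ) := by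
    have := hFconv z xt (1 - w) w (sub_nonneg.2 hw1) hw0.le (by ring)
    rwa [← hz', hfz, hfxt, ← EReal.coe_mul, ← EReal.coe_mul, ← EReal.coe_add] at this
  have hsmooth := half_norm_sq_convex_comb_le A A' hw0.le hw1 hz' herr hbnd
  have hreal : 1 / 2 * ‖A z'‖ ^ 2 + ((1 - w) * fz + w * fxt) + w * ε / 2 * ‖z - xt‖ ^ 2
      ≤ 1 / 2 * ‖A z‖ ^ 2 + fz := by
    rw [norm_sub_rev]
    linarith [mul_le_mul_of_nonneg_left hmodel hw0.le,
      mul_nonneg (mul_nonneg hw0.le (sq_nonneg ‖xt - z‖)) (sub_nonneg.2 hβw)]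
  rw [Jobj, Jobj, hfz]
  calc ((1 / 2 * ‖A z'‖ ^ 2 : ℝ) : EReal) + F z' + ((w * ε / 2 * ‖z - xt‖ ^ 2 : ℝ) : EReal)
      ≤ ((1 / 2 * ‖A z'‖ ^ 2 : ℝ) : EReal) + (((1 - w) * fz + w * fxt : ℝ) : EReal)
          + ((w * ε / 2 * ‖z - xt‖ ^ 2 : ℝ) : EReal) := by gcongr
    _ ≤ _ := by exact_mod_cast hreal

/-- The per-iteration sufficient-decrease inequality (2.10):
`J(z) − J(z') ≥ (wε/2)‖z − x̃‖²` for `z' = (1 − w)z + w·x̃`. -/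
theorem stmt_4 {N M : ℕ}
    (F : EuclideanSpace ℝ (Fin N) → EReal)
    (A : EuclideanSpace ℝ (Fin N) → EuclideanSpace ℝ (Fin M))
    (A' : EuclideanSpace ℝ (Fin N) → (EuclideanSpace ℝ (Fin N) →L[ℝ] EuclideanSpace ℝ (Fin M)))
    (hFconv : ∀ x y : EuclideanSpace ℝ (Fin N), ∀ a b : ℝ, 0 ≤ a → 0 ≤ b → a + b = 1 →
      F (a • x + b • y) ≤ (a : EReal) * F x + (b : EReal) * F y)
    (hFproper : ∃ x, F x ≠ ⊤)
    (hFnebot : ∀ x, F x ≠ ⊥)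
    (hFlsc : LowerSemicontinuous F)
    (hA : ∀ x, HasFDerivAt A (A' x) x)
    (hA'cont : Continuous A')
    (z xt : EuclideanSpace ℝ (Fin N)) (hz : F z < ⊤)
    (β ε C Amax w : ℝ)
    (hβ : 0 < β) (hε : 0 < ε) (hC : 0 < C) (hAmax : 0 < Amax)
    (hw : w ∈ Set.Ioc (0 : ℝ) 1)
    (hβw : 2 * w * C * Amax + ε ≤ β)
    (z' : EuclideanSpace ℝ (Fin N)) (hz' : z' = (1 - w) • z + w • xt)
    (hdec : Jprox F A A' β z xt ≤ Jprox F A A' β z z)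
    (herr : ‖A z' - Alin A A' z z'‖ ≤ C * ‖z' - z‖ ^ 2)
    (hbnd : ‖A z'‖ ≤ Amax) :
    Jobj F A z' + ((w * ε / 2 * ‖z - xt‖ ^ 2 : ℝ) : EReal) ≤ Jobj F A z :=
  stmt_4_general F A A' hFconv hFnebot z xt hz β ε C Amax w hw hβw z' hz' hdec herr hbnd
end

section
/- Under Assumption 2.1 and the step-size bound 0 < w ≤ min{1, 𝔡/√(2β⁻¹(J(z⁰) − inf F)), (β − ε)/(2C·A_max)} for some β, ε > 0, let (z^k) and (x̃^k) be sequences with z^{k+1} = (1 − w)z^k + w·x̃^k and J̃_{z^k}(x̃^k) ≤ J̃_{z^k}(z^k) for every k, where J̃_z(x) := (1/2)‖A(z) + A'(z)(x − z)‖² + F(x) + (β/2)‖x − z‖². Then J(z^{k+1}) ≤ J(z^k) for all k (with strict inequality whenever x̃^k ≠ z^k), and J(z^k) converges monotonically to some limit L ∈ ℝ (Theorem 2.1(i)). -/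
open Filter Topology Metric Bornology
open scoped RealInnerProductSpace

private lemma sq_norm_convex_aux {E : Type*} [SeminormedAddCommGroup E] [NormedSpace ℝ E]
    (a b : E) (w : ℝ) (h0 : 0 ≤ w) (h1 : w ≤ 1) :
    ‖(1 - w) • a + w • b‖ ^ 2 ≤ (1 - w) * ‖a‖ ^ 2 + w * ‖b‖ ^ 2 := by
  have ht : ‖(1 - w) • a + w • b‖ ≤ (1 - w) * ‖a‖ + w * ‖b‖ := by
    calc ‖(1 - w) • a + w • b‖ ≤ ‖(1 - w) • a‖ + ‖w • b‖ := norm_add_le _ _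
    _ = (1 - w) * ‖a‖ + w * ‖b‖ := by
        rw [norm_smul, norm_smul, Real.norm_eq_abs, Real.norm_eq_abs,
          abs_of_nonneg (by linarith), abs_of_nonneg h0]
  have h2 : ‖(1 - w) • a + w • b‖ ^ 2 ≤ ((1 - w) * ‖a‖ + w * ‖b‖) ^ 2 :=
    pow_le_pow_left₀ (norm_nonneg _) ht 2
  nlinarith [h2, mul_nonneg (mul_nonneg h0 (by linarith : (0:ℝ) ≤ 1 - w))
    (sq_nonneg (‖a‖ - ‖b‖))]

set_option maxHeartbeats 2000000 in
/-- Theorem 2.1(i): under Assumption 2.1 and the step-size bound (2.3),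
`J(z^k)` is monotonically decreasing (strictly whenever `x̃^k ≠ z^k`) and
converges to some limit `L ∈ ℝ`. -/
theorem stmt_5 {N M : ℕ}
    (F : EuclideanSpace ℝ (Fin N) → EReal)
    (A : EuclideanSpace ℝ (Fin N) → EuclideanSpace ℝ (Fin M))
    (A' : EuclideanSpace ℝ (Fin N) → (EuclideanSpace ℝ (Fin N) →L[ℝ] EuclideanSpace ℝ (Fin M)))
    -- Assumption 2.1
    (hFconv : ∀ x y : EuclideanSpace ℝ (Fin N), ∀ a b : ℝ, 0 ≤ a → 0 ≤ b → a + b = 1 →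
      F (a • x + b • y) ≤ (a : EReal) * F x + (b : EReal) * F y)
    (hFproper : ∃ x, F x ≠ ⊤)
    (hFnebot : ∀ x, F x ≠ ⊥)
    (hFlsc : LowerSemicontinuous F)
    (hInf : ⊥ < ⨅ x, F x)
    (hderiv : ∀ x, F x ≠ ⊤ → HasFDerivAt A (A' x) x)
    (hA'cont : ContinuousOn A' {x | F x ≠ ⊤})
    (z xt : ℕ → EuclideanSpace ℝ (Fin N))
    (hz0 : F (z 0) ≠ ⊤)
    (hlev : IsBounded {x | Jobj F A x ≤ Jobj F A (z 0)})
    (Amax C dd : ℝ) (hC : 0 < C) (hdd : 0 < dd)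
    (hAmax : ∀ x, F x ≠ ⊤ → ‖A x‖ ≤ Amax)
    (herr : ∀ y, Jobj F A y ≤ Jobj F A (z 0) → ∀ x ∈ closedBall y dd,
      ‖A x - Alin A A' y x‖ ≤ C * ‖x - y‖ ^ 2)
    -- the step-size bound (2.3)
    (β ε w : ℝ) (hβ : 0 < β) (hε : 0 < ε)
    (hw0 : 0 < w) (hw1 : w ≤ 1)
    (hw2 : w ≤ dd / Real.sqrt (2 * β⁻¹ * (Jobj F A (z 0) - ⨅ x, F x).toReal))
    (hw3 : w ≤ (β - ε) / (2 * C * Amax))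
    -- the iteration
    (hrec : ∀ k, z (k + 1) = (1 - w) • z k + w • xt k)
    (hdec : ∀ k, Jprox F A A' β (z k) (xt k) ≤ Jprox F A A' β (z k) (z k)) :
    (∀ k, Jobj F A (z (k + 1)) ≤ Jobj F A (z k)) ∧
    (∀ k, xt k ≠ z k → Jobj F A (z (k + 1)) < Jobj F A (z k)) ∧
    ∃ L : ℝ, Tendsto (fun k => Jobj F A (z k)) atTop (𝓝 ((L : ℝ) : EReal)) := by
  classical
  have hw0' : (0 : ℝ) ≤ w := hw0.le
  have hw1' : (0 : ℝ) ≤ 1 - w := by linarith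
  have hAmax0 : (0 : ℝ) ≤ Amax := le_trans (norm_nonneg _) (hAmax _ hz0)
  have hden : 0 < 2 * C * Amax := by
    rcases lt_or_ge 0 (2 * C * Amax) with h | h
    · exact h
    · exfalso
      have h0 : 2 * C * Amax = 0 := le_antisymm h (by positivity)
      rw [h0, div_zero] at hw3
      linarith
  have hβε : w * (2 * C * Amax) ≤ β - ε := (le_div_iff₀ hden).mp hw3
  have hFr : ∀ x, F x ≠ ⊤ → F x = ((F x).toReal : EReal) :=
    fun x hx => (EReal.coe_toReal hx (hFnebot x)).symm
  -- real-valued objective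
  obtain ⟨jr, hjr⟩ : ∃ jr : EuclideanSpace ℝ (Fin N) → ℝ,
      ∀ x, jr x = 1 / 2 * ‖A x‖ ^ 2 + (F x).toReal := ⟨_, fun _ => rfl⟩
  have hJobj : ∀ x, F x ≠ ⊤ → Jobj F A x = ((jr x : ℝ) : EReal) := by
    intro x hx
    rw [Jobj, hFr x hx, ← EReal.coe_add, hjr x]
  -- the infimum of F as a real number
  have hInf_le : (⨅ x, F x) ≤ F (z 0) := iInf_le _ _
  have hInf_ne_top : (⨅ x, F x) ≠ ⊤ := ne_top_of_le_ne_top hz0 hInf_le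
  obtain ⟨i, hi⟩ : ∃ i : ℝ, (⨅ x, F x) = (i : EReal) :=
    ⟨_, (EReal.coe_toReal hInf_ne_top hInf.ne').symm⟩
  have hilb : ∀ x, F x ≠ ⊤ → i ≤ (F x).toReal := by
    intro x hx
    have h1 : (i : EReal) ≤ ((F x).toReal : EReal) := by
      rw [← hi, ← hFr x hx]; exact iInf_le _ _
    exact EReal.coe_le_coe_iff.mp h1
  obtain ⟨j0, hj0⟩ : ∃ j0 : ℝ, j0 = jr (z 0) := ⟨_, rfl⟩
  have hw2' : w ≤ dd / Real.sqrt (2 * β⁻¹ * (j0 - i)) := by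
    have h1 : (Jobj F A (z 0) - ⨅ x, F x).toReal = j0 - i := by
      rw [hJobj _ hz0, hi, ← EReal.coe_sub, EReal.toReal_coe, hj0]
    rwa [h1] at hw2
  have hAlin_self : ∀ y, Alin A A' y y = A y := by
    intro y; simp [Alin]
  have hJprox_self : ∀ y, F y ≠ ⊤ → Jprox F A A' β y y = ((jr y : ℝ) : EReal) := by
    intro y hy
    rw [Jprox, Jlin, hAlin_self, hFr y hy, ← EReal.coe_add, ← EReal.coe_add, hjr y]
    norm_num
  -- the key one-step estimate
  have key : ∀ k, F (z k) ≠ ⊤ → jr (z k) ≤ j0 →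
      F (z (k + 1)) ≠ ⊤ ∧ jr (z (k + 1)) + ε * w / 2 * ‖xt k - z k‖ ^ 2 ≤ jr (z k) := by
    intro k hz hjz
    obtain ⟨s, hs⟩ : ∃ s : ℝ, s = ‖xt k - z k‖ := ⟨_, rfl⟩
    have hsnn : (0 : ℝ) ≤ s := hs ▸ norm_nonneg _
    have hFx : F (xt k) ≠ ⊤ := by
      intro htop
      have h1 := hdec k
      have h2 : Jprox F A A' β (z k) (xt k) = ⊤ := by
        rw [Jprox, Jlin, htop, EReal.coe_add_top, EReal.top_add_coe]
      rw [h2, hJprox_self (z k) hz, top_le_iff] at h1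
      exact EReal.coe_ne_top _ h1
    have hdec_r : 1 / 2 * ‖Alin A A' (z k) (xt k)‖ ^ 2 + (F (xt k)).toReal + β / 2 * s ^ 2
        ≤ 1 / 2 * ‖A (z k)‖ ^ 2 + (F (z k)).toReal := by
      have h1 := hdec k
      rw [hJprox_self (z k) hz, Jprox, Jlin, hFr (xt k) hFx, ← EReal.coe_add,
        ← EReal.coe_add, hjr (z k)] at h1
      have h2 := EReal.coe_le_coe_iff.mp h1
      rw [hs]
      linarith
    have hjz' : 1 / 2 * ‖A (z k)‖ ^ 2 + (F (z k)).toReal ≤ j0 := by rw [← hjr]; exact hjz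
    have hAlinnn : (0:ℝ) ≤ ‖Alin A A' (z k) (xt k)‖ ^ 2 := sq_nonneg _
    have hFxlb : i ≤ (F (xt k)).toReal := hilb _ hFx
    have hs2 : β / 2 * s ^ 2 ≤ j0 - i := by linarith
    have hws : w * s ≤ dd := by
      rcases eq_or_lt_of_le (Real.sqrt_nonneg (2 * β⁻¹ * (j0 - i))) with h0 | hrpos
      · exfalso
        rw [← h0, div_zero] at hw2'
        linarith
      · have hsq : s ^ 2 ≤ 2 * β⁻¹ * (j0 - i) := by
          have hbi : β * β⁻¹ = 1 := mul_inv_cancel₀ hβ.ne'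
          nlinarith [mul_nonneg (inv_pos.2 hβ).le
            (by linarith : (0:ℝ) ≤ j0 - i - β / 2 * s ^ 2)]
        have hsle : s ≤ Real.sqrt (2 * β⁻¹ * (j0 - i)) := by
          calc s = Real.sqrt (s ^ 2) := (Real.sqrt_sq hsnn).symm
          _ ≤ Real.sqrt (2 * β⁻¹ * (j0 - i)) := Real.sqrt_le_sqrt hsq
        calc w * s ≤ (dd / Real.sqrt (2 * β⁻¹ * (j0 - i))) * Real.sqrt (2 * β⁻¹ * (j0 - i)) := by
              apply mul_le_mul hw2' hsle hsnn
              positivity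
        _ = dd := div_mul_cancel₀ dd hrpos.ne'
    have hz'sub : z (k + 1) - z k = w • (xt k - z k) := by
      rw [hrec k]; module
    have hnorm : ‖z (k + 1) - z k‖ = w * s := by
      rw [hz'sub, norm_smul, Real.norm_eq_abs, abs_of_nonneg hw0', hs]
    have hball : z (k + 1) ∈ closedBall (z k) dd := by
      rw [mem_closedBall, dist_eq_norm, hnorm]; exact hws
    have hJle : Jobj F A (z k) ≤ Jobj F A (z 0) := by
      rw [hJobj _ hz, hJobj _ hz0, ← hj0]
      exact_mod_cast hjz
    have herr' : ‖A (z (k + 1)) - Alin A A' (z k) (z (k + 1))‖ ≤ C * (w * s) ^ 2 := by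
      have h1 := herr (z k) hJle (z (k + 1)) hball
      rwa [hnorm] at h1
    have hc := hFconv (z k) (xt k) (1 - w) w hw1' hw0' (by ring)
    rw [← hrec k, hFr (z k) hz, hFr (xt k) hFx, ← EReal.coe_mul, ← EReal.coe_mul,
      ← EReal.coe_add] at hc
    have hFz' : F (z (k + 1)) ≠ ⊤ := ne_top_of_le_ne_top (EReal.coe_ne_top _) hc
    rw [hFr _ hFz'] at hc
    have hFz'r : (F (z (k + 1))).toReal ≤ (1 - w) * (F (z k)).toReal + w * (F (xt k)).toReal :=
      EReal.coe_le_coe_iff.mp hc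
    have hAlinz' : Alin A A' (z k) (z (k + 1))
        = (1 - w) • (A (z k)) + w • (Alin A A' (z k) (xt k)) := by
      rw [Alin, Alin, hz'sub, map_smul]; module
    have hconv2 : ‖Alin A A' (z k) (z (k + 1))‖ ^ 2
        ≤ (1 - w) * ‖A (z k)‖ ^ 2 + w * ‖Alin A A' (z k) (xt k)‖ ^ 2 := by
      rw [hAlinz']; exact sq_norm_convex_aux _ _ w hw0' hw1
    have hAz' : ‖A (z (k + 1))‖ ≤ Amax := hAmax _ hFz'
    have hquad : 1 / 2 * ‖A (z (k + 1))‖ ^ 2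
        ≤ 1 / 2 * ‖Alin A A' (z k) (z (k + 1))‖ ^ 2 + Amax * (C * (w * s) ^ 2) := by
      have hab : ‖A (z (k + 1))‖ - ‖Alin A A' (z k) (z (k + 1))‖
          ≤ ‖A (z (k + 1)) - Alin A A' (z k) (z (k + 1))‖ := norm_sub_norm_le _ _
      have h1 : ‖A (z (k + 1))‖ * ‖A (z (k + 1)) - Alin A A' (z k) (z (k + 1))‖
          ≤ Amax * (C * (w * s) ^ 2) :=
        mul_le_mul hAz' herr' (norm_nonneg _) hAmax0
      have h2 : ‖A (z (k + 1))‖ * (‖A (z (k + 1))‖ - ‖Alin A A' (z k) (z (k + 1))‖)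
          ≤ ‖A (z (k + 1))‖ * ‖A (z (k + 1)) - Alin A A' (z k) (z (k + 1))‖ :=
        mul_le_mul_of_nonneg_left hab (norm_nonneg _)
      nlinarith [sq_nonneg (‖A (z (k + 1))‖ - ‖Alin A A' (z k) (z (k + 1))‖)]
    refine ⟨hFz', ?_⟩
    have hmul : Amax * (C * (w * s) ^ 2) ≤ (β - ε) / 2 * w * s ^ 2 := by
      nlinarith [mul_le_mul_of_nonneg_right hβε (mul_nonneg hw0' (sq_nonneg s))]
    have hwdec := mul_le_mul_of_nonneg_left hdec_r hw0'
    rw [hjr (z (k + 1)), hjr (z k), ← hs]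
    nlinarith [hconv2, hquad, hFz'r, hwdec, hmul]
  have hP : ∀ k, F (z k) ≠ ⊤ ∧ jr (z k) ≤ j0 := by
    intro k
    induction k with
    | zero => exact ⟨hz0, le_of_eq hj0.symm⟩
    | succ n ih =>
      obtain ⟨h1, h2⟩ := key n ih.1 ih.2
      refine ⟨h1, ?_⟩
      nlinarith [mul_nonneg (mul_nonneg (mul_nonneg hε.le hw0') (by norm_num : (0:ℝ) ≤ 1/2))
        (sq_nonneg ‖xt n - z n‖), ih.2]
  have hmono : ∀ k, jr (z (k + 1)) + ε * w / 2 * ‖xt k - z k‖ ^ 2 ≤ jr (z k) :=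
    fun k => (key k (hP k).1 (hP k).2).2
  have hmono' : ∀ k, jr (z (k + 1)) ≤ jr (z k) := by
    intro k
    nlinarith [hmono k, mul_nonneg (mul_nonneg (mul_nonneg hε.le hw0')
      (by norm_num : (0:ℝ) ≤ 1/2)) (sq_nonneg ‖xt k - z k‖)]
  refine ⟨?_, ?_, ?_⟩
  · intro k
    rw [hJobj _ (hP (k + 1)).1, hJobj _ (hP k).1]
    exact_mod_cast hmono' k
  · intro k hne
    rw [hJobj _ (hP (k + 1)).1, hJobj _ (hP k).1]
    have hspos : 0 < ‖xt k - z k‖ := norm_pos_iff.mpr (sub_ne_zero.mpr hne)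
    have hlt : jr (z (k + 1)) < jr (z k) := by
      nlinarith [hmono k, mul_pos (mul_pos (mul_pos hε hw0)
        (by norm_num : (0:ℝ) < 1/2)) (pow_pos hspos 2)]
    exact_mod_cast hlt
  · have hanti : Antitone (fun k => jr (z k)) := antitone_nat_of_succ_le hmono'
    have hbdd : BddBelow (Set.range fun k => jr (z k)) := by
      refine ⟨i, ?_⟩
      rintro _ ⟨k, rfl⟩
      have h1 := hilb _ (hP k).1
      have h2 : (0:ℝ) ≤ 1 / 2 * ‖A (z k)‖ ^ 2 := by positivity
      show i ≤ jr (z k)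
      rw [hjr (z k)]
      linarith
    refine ⟨⨅ k, jr (z k), ?_⟩
    have ht := tendsto_atTop_ciInf hanti hbdd
    have heq : (fun k => Jobj F A (z k)) = fun k => ((jr (z k) : ℝ) : EReal) :=
      funext fun k => hJobj _ (hP k).1
    rw [heq]
    exact EReal.tendsto_coe.2 ht
end

section
/- Under Assumption 2.1, the step-size bound 0 < w ≤ min{1, 𝔡/√(2β⁻¹(J(z⁰) − inf F)), (β − ε)/(2C·A_max)} for some β, ε > 0, and sequences (z^k), (x̃^k) with z^{k+1} = (1 − w)z^k + w·x̃^k and J̃_{z^k}(x̃^k) ≤ J̃_{z^k}(z^k) for every k (where J̃_z(x) := (1/2)‖A(z) + A'(z)(x − z)‖² + F(x) + (β/2)‖x − z‖²), the squared increments are summable: Σ_{k=0}^∞ ‖z^k − x̃^k‖² ≤ (2/(wε))·(J(z⁰) − inf F); in particular z^k − x̃^k → 0 and z^{k+1} − z^k → 0. -/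
open Filter Topology Metric Bornology
open scoped RealInnerProductSpace

/-- Real-valued version of the objective (valid on the domain of `F`). -/
noncomputable def Jre {N M : ℕ} (F : EuclideanSpace ℝ (Fin N) → EReal)
    (A : EuclideanSpace ℝ (Fin N) → EuclideanSpace ℝ (Fin M))
    (x : EuclideanSpace ℝ (Fin N)) : ℝ :=
  1 / 2 * ‖A x‖ ^ 2 + (F x).toReal

set_option maxHeartbeats 2000000

/-- `(1/2)‖a‖² ≤ (1/2)‖b‖² + ‖a − b‖‖a‖` in any normed group. -/
lemma half_sq_le {E : Type*} [NormedAddCommGroup E] (a b : E) :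
    1 / 2 * ‖a‖ ^ 2 ≤ 1 / 2 * ‖b‖ ^ 2 + ‖a - b‖ * ‖a‖ := by
  have habs : |‖a‖ - ‖a - b‖| ≤ ‖b‖ := by
    have h7 := abs_norm_sub_norm_le a (a - b)
    rwa [sub_sub_cancel] at h7
  obtain ⟨ha1, ha2⟩ := abs_le.mp habs
  have h8 : (‖a‖ - ‖a - b‖) ^ 2 ≤ ‖b‖ ^ 2 := sq_le_sq' ha1 ha2
  nlinarith [sq_nonneg ‖a - b‖]

/-- Under Assumption 2.1 and the step-size bound (2.3), the squared increments are
summable: `Σ_k ‖z^k − x̃^k‖² ≤ (2/(wε))(J(z⁰) − inf F)`; in particular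
`z^k − x̃^k → 0` and `z^{k+1} − z^k → 0`. -/
theorem stmt_6 {N M : ℕ}
    (F : EuclideanSpace ℝ (Fin N) → EReal)
    (A : EuclideanSpace ℝ (Fin N) → EuclideanSpace ℝ (Fin M))
    (A' : EuclideanSpace ℝ (Fin N) → (EuclideanSpace ℝ (Fin N) →L[ℝ] EuclideanSpace ℝ (Fin M)))
    -- Assumption 2.1
    (hFconv : ∀ x y : EuclideanSpace ℝ (Fin N), ∀ a b : ℝ, 0 ≤ a → 0 ≤ b → a + b = 1 →
      F (a • x + b • y) ≤ (a : EReal) * F x + (b : EReal) * F y)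
    (hFproper : ∃ x, F x ≠ ⊤)
    (hFnebot : ∀ x, F x ≠ ⊥)
    (hFlsc : LowerSemicontinuous F)
    (hInf : ⊥ < ⨅ x, F x)
    (hderiv : ∀ x, F x ≠ ⊤ → HasFDerivAt A (A' x) x)
    (hA'cont : ContinuousOn A' {x | F x ≠ ⊤})
    (z xt : ℕ → EuclideanSpace ℝ (Fin N))
    (hz0 : F (z 0) ≠ ⊤)
    (hlev : IsBounded {x | Jobj F A x ≤ Jobj F A (z 0)})
    (Amax C dd : ℝ) (hC : 0 < C) (hdd : 0 < dd)
    (hAmax : ∀ x, F x ≠ ⊤ → ‖A x‖ ≤ Amax)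
    (herr : ∀ y, Jobj F A y ≤ Jobj F A (z 0) → ∀ x ∈ closedBall y dd,
      ‖A x - Alin A A' y x‖ ≤ C * ‖x - y‖ ^ 2)
    -- the step-size bound (2.3)
    (β ε w : ℝ) (hβ : 0 < β) (hε : 0 < ε)
    (hw0 : 0 < w) (hw1 : w ≤ 1)
    (hw2 : w ≤ dd / Real.sqrt (2 * β⁻¹ * (Jobj F A (z 0) - ⨅ x, F x).toReal))
    (hw3 : w ≤ (β - ε) / (2 * C * Amax))
    -- the iteration
    (hrec : ∀ k, z (k + 1) = (1 - w) • z k + w • xt k)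
    (hdec : ∀ k, Jprox F A A' β (z k) (xt k) ≤ Jprox F A A' β (z k) (z k)) :
    Summable (fun k => ‖z k - xt k‖ ^ 2) ∧
    (∑' k, ‖z k - xt k‖ ^ 2) ≤ 2 / (w * ε) * (Jobj F A (z 0) - ⨅ x, F x).toReal ∧
    Tendsto (fun k => z k - xt k) atTop (𝓝 0) ∧
    Tendsto (fun k => z (k + 1) - z k) atTop (𝓝 0) := by
  classical
  obtain ⟨x₀, hx₀⟩ := hFproper
  have hFinf_ne_bot : (⨅ x, F x) ≠ ⊥ := hInf.ne'
  have hFinf_ne_top : (⨅ x, F x) ≠ ⊤ := by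
    intro h
    have h1 := iInf_le F x₀
    rw [h] at h1
    exact hx₀ (top_le_iff.mp h1)
  set m : ℝ := (⨅ x, F x).toReal with hm_def
  have hm : (⨅ x, F x) = (m : EReal) := (EReal.coe_toReal hFinf_ne_top hFinf_ne_bot).symm
  have hFcoe : ∀ x, F x ≠ ⊤ → F x = (((F x).toReal : ℝ) : EReal) :=
    fun x hx => (EReal.coe_toReal hx (hFnebot x)).symm
  have hmle : ∀ x, F x ≠ ⊤ → m ≤ (F x).toReal := by
    intro x hx
    have h1 : (⨅ y, F y) ≤ F x := iInf_le F x
    rw [hm, hFcoe x hx] at h1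
    exact EReal.coe_le_coe_iff.mp h1
  have hJobj : ∀ x, F x ≠ ⊤ → Jobj F A x = ((Jre F A x : ℝ) : EReal) := by
    intro x hx
    rw [Jobj, Jre]
    conv_lhs => rw [hFcoe x hx]
    rw [← EReal.coe_add]
  have hD : (Jobj F A (z 0) - ⨅ x, F x).toReal = Jre F A (z 0) - m := by
    rw [hJobj _ hz0, hm, ← EReal.coe_sub, EReal.toReal_coe]
  have hmleJ : ∀ x, F x ≠ ⊤ → m ≤ Jre F A x := by
    intro x hx
    have h1 := hmle x hx
    have h2 : (0:ℝ) ≤ 1 / 2 * ‖A x‖ ^ 2 := by positivity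
    rw [Jre]; linarith
  have hAm0 : 0 ≤ Amax := le_trans (norm_nonneg _) (hAmax (z 0) hz0)
  have hAmpos : 0 < Amax := by
    rcases hAm0.lt_or_eq with h | h
    · exact h
    · exfalso
      rw [← h] at hw3
      simp at hw3
      linarith
  have hβε : C * Amax * w ≤ (β - ε) / 2 := by
    have hden : 0 < 2 * C * Amax := by positivity
    have h1 := (le_div_iff₀ hden).mp hw3
    nlinarith
  rw [hD] at hw2
  -- realified decrease condition
  have hstep1 : ∀ k, F (z k) ≠ ⊤ → F (xt k) ≠ ⊤ ∧
      1 / 2 * ‖Alin A A' (z k) (xt k)‖ ^ 2 + (F (xt k)).toReal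
        + β / 2 * ‖xt k - z k‖ ^ 2 ≤ 1 / 2 * ‖A (z k)‖ ^ 2 + (F (z k)).toReal := by
    intro k hzk
    have hdk := hdec k
    have hAzz : Alin A A' (z k) (z k) = A (z k) := by
      simp [Alin, sub_self]
    have hRHS : Jprox F A A' β (z k) (z k)
        = ((1 / 2 * ‖A (z k)‖ ^ 2 + (F (z k)).toReal : ℝ) : EReal) := by
      rw [Jprox, Jlin, hAzz, sub_self, norm_zero]
      conv_lhs => rw [hFcoe _ hzk]
      norm_num
    rw [hRHS] at hdk
    have hxt : F (xt k) ≠ ⊤ := by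
      intro h
      rw [Jprox, Jlin, h, EReal.coe_add_top,
        EReal.top_add_of_ne_bot (EReal.coe_ne_bot _)] at hdk
      exact EReal.coe_ne_top _ (top_le_iff.mp hdk)
    refine ⟨hxt, ?_⟩
    rw [Jprox, Jlin, hFcoe _ hxt] at hdk
    exact_mod_cast hdk
  -- the key one-step decrease
  have hkey : ∀ k, F (z k) ≠ ⊤ → Jre F A (z k) ≤ Jre F A (z 0) →
      F (z (k + 1)) ≠ ⊤ ∧
      Jre F A (z (k + 1)) + w * ε / 2 * ‖z k - xt k‖ ^ 2 ≤ Jre F A (z k) := by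
    intro k hzk hJk
    obtain ⟨hxt, h1⟩ := hstep1 k hzk
    set u : ℝ := ‖xt k - z k‖ with hu_def
    have hu0 : 0 ≤ u := norm_nonneg _
    simp only [Jre] at hJk
    -- bound on u
    have hβu : β / 2 * u ^ 2 ≤ Jre F A (z 0) - m := by
      have h2 : (0:ℝ) ≤ 1 / 2 * ‖Alin A A' (z k) (xt k)‖ ^ 2 := by positivity
      have h3 := hmle _ hxt
      simp only [Jre]
      linarith
    have hwu : w * u ≤ dd := by
      have hβne : (β:ℝ) ≠ 0 := hβ.ne'
      have hu2 : u ^ 2 ≤ 2 * β⁻¹ * (Jre F A (z 0) - m) := by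
        have h4 := mul_le_mul_of_nonneg_left hβu (by positivity : (0:ℝ) ≤ 2 * β⁻¹)
        calc u ^ 2 = 2 * β⁻¹ * (β / 2 * u ^ 2) := by field_simp
          _ ≤ 2 * β⁻¹ * (Jre F A (z 0) - m) := h4
      have hus : u ≤ Real.sqrt (2 * β⁻¹ * (Jre F A (z 0) - m)) := by
        rw [← Real.sqrt_sq hu0]
        exact Real.sqrt_le_sqrt hu2
      rcases eq_or_lt_of_le (Real.sqrt_nonneg (2 * β⁻¹ * (Jre F A (z 0) - m))) with hs | hs
      · have hu00 : u = 0 := le_antisymm (by rw [← hs] at hus; exact hus) hu0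
        rw [hu00, mul_zero]
        exact hdd.le
      · have h5 := (le_div_iff₀ hs).mp hw2
        have h6 := mul_le_mul_of_nonneg_left hus hw0.le
        linarith
    -- convexity of F
    have hFc := hFconv (z k) (xt k) (1 - w) w (by linarith) hw0.le (by ring)
    rw [← hrec k, hFcoe _ hzk, hFcoe _ hxt, ← EReal.coe_mul, ← EReal.coe_mul,
      ← EReal.coe_add] at hFc
    have hz' : F (z (k + 1)) ≠ ⊤ := by
      intro h
      rw [h] at hFc
      exact (EReal.coe_ne_top _) (top_le_iff.mp hFc)
    have hFc' : (F (z (k + 1))).toReal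
        ≤ (1 - w) * (F (z k)).toReal + w * (F (xt k)).toReal := by
      rw [hFcoe _ hz'] at hFc
      exact_mod_cast hFc
    -- linearisation at the new point
    have hzdiff : z (k + 1) - z k = w • (xt k - z k) := by
      rw [hrec k]; module
    have hzn : ‖z (k + 1) - z k‖ = w * u := by
      rw [hzdiff, norm_smul, Real.norm_of_nonneg hw0.le]
    have heqL : Alin A A' (z k) (z (k + 1))
        = (1 - w) • A (z k) + w • Alin A A' (z k) (xt k) := by
      rw [Alin, Alin, hzdiff, map_smul]
      module
    have hnormL : ‖Alin A A' (z k) (z (k + 1))‖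
        ≤ (1 - w) * ‖A (z k)‖ + w * ‖Alin A A' (z k) (xt k)‖ := by
      rw [heqL]
      refine le_trans (norm_add_le _ _) ?_
      rw [norm_smul, norm_smul, Real.norm_of_nonneg (by linarith : (0:ℝ) ≤ 1 - w),
        Real.norm_of_nonneg hw0.le]
    have hsqL : ‖Alin A A' (z k) (z (k + 1))‖ ^ 2
        ≤ (1 - w) * ‖A (z k)‖ ^ 2 + w * ‖Alin A A' (z k) (xt k)‖ ^ 2 := by
      nlinarith [hnormL, norm_nonneg (Alin A A' (z k) (z (k + 1))),
        norm_nonneg (A (z k)), norm_nonneg (Alin A A' (z k) (xt k)),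
        mul_nonneg (mul_nonneg hw0.le (by linarith : (0:ℝ) ≤ 1 - w))
          (sq_nonneg (‖A (z k)‖ - ‖Alin A A' (z k) (xt k)‖))]
    -- quadratic error bound
    have hJle : Jobj F A (z k) ≤ Jobj F A (z 0) := by
      rw [hJobj _ hzk, hJobj _ hz0]
      exact_mod_cast hJk
    have hball : z (k + 1) ∈ closedBall (z k) dd := by
      rw [mem_closedBall, dist_eq_norm, hzn]
      exact hwu
    have herrk := herr (z k) hJle (z (k + 1)) hball
    rw [hzn] at herrk
    -- half-square inequality
    set va := A (z (k + 1)) with hva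
    set vb := Alin A A' (z k) (z (k + 1)) with hvb
    have hhalf : 1 / 2 * ‖va‖ ^ 2 ≤ 1 / 2 * ‖vb‖ ^ 2 + ‖va - vb‖ * ‖va‖ :=
      half_sq_le va vb
    have hAz' : ‖va‖ ≤ Amax := hAmax _ hz'
    have h5 : ‖va - vb‖ * ‖va‖ ≤ C * (w * u) ^ 2 * Amax :=
      mul_le_mul herrk hAz' (norm_nonneg _) (by positivity)
    have h6 := mul_le_mul_of_nonneg_left h1 hw0.le
    have h7' : C * (w * u) ^ 2 * Amax ≤ w * u ^ 2 * ((β - ε) / 2) := by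
      have h8 := mul_le_mul_of_nonneg_right hβε (mul_nonneg hw0.le (sq_nonneg u))
      nlinarith
    refine ⟨hz', ?_⟩
    have hrev : ‖z k - xt k‖ = u := by rw [hu_def, norm_sub_rev]
    rw [hrev]
    simp only [Jre, ← hva, ← hvb]
    linarith [hhalf, hsqL, hFc', h5, h6, h7']
  -- induction: the iterates stay in the domain with decreasing objective
  have hinv : ∀ k, F (z k) ≠ ⊤ ∧ Jre F A (z k) ≤ Jre F A (z 0) := by
    intro k
    induction k with
    | zero => exact ⟨hz0, le_refl _⟩
    | succ n ih =>
      obtain ⟨h3, h4⟩ := hkey n ih.1 ih.2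
      refine ⟨h3, ?_⟩
      have h5 : (0:ℝ) ≤ w * ε / 2 * ‖z n - xt n‖ ^ 2 := by positivity
      linarith [ih.2]
  have hdecstep : ∀ k, Jre F A (z (k + 1)) + w * ε / 2 * ‖z k - xt k‖ ^ 2 ≤ Jre F A (z k) :=
    fun k => (hkey k (hinv k).1 (hinv k).2).2
  have hpartial : ∀ n, Jre F A (z n) + w * ε / 2 * ∑ i ∈ Finset.range n, ‖z i - xt i‖ ^ 2
      ≤ Jre F A (z 0) := by
    intro n
    induction n with
    | zero => simp
    | succ n ih =>
      rw [Finset.sum_range_succ]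
      have h1 := hdecstep n
      nlinarith [ih, h1]
  have hwe : (0:ℝ) < w * ε := by positivity
  have hbound : ∀ n, ∑ i ∈ Finset.range n, ‖z i - xt i‖ ^ 2
      ≤ 2 / (w * ε) * (Jre F A (z 0) - m) := by
    intro n
    have h1 := hpartial n
    have h2 : m ≤ Jre F A (z n) := hmleJ _ (hinv n).1
    have h3 : w * ε / 2 * ∑ i ∈ Finset.range n, ‖z i - xt i‖ ^ 2 ≤ Jre F A (z 0) - m := by
      linarith
    calc ∑ i ∈ Finset.range n, ‖z i - xt i‖ ^ 2
        = 2 / (w * ε) * (w * ε / 2 * ∑ i ∈ Finset.range n, ‖z i - xt i‖ ^ 2) := by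
          field_simp
      _ ≤ 2 / (w * ε) * (Jre F A (z 0) - m) :=
          mul_le_mul_of_nonneg_left h3 (by positivity)
  have hnn : ∀ k : ℕ, (0:ℝ) ≤ ‖z k - xt k‖ ^ 2 := fun k => sq_nonneg _
  have hsummable : Summable (fun k => ‖z k - xt k‖ ^ 2) := summable_of_sum_range_le hnn hbound
  have htend0 : Tendsto (fun k => ‖z k - xt k‖ ^ 2) atTop (𝓝 0) := hsummable.tendsto_atTop_zero
  have htend1 : Tendsto (fun k => ‖z k - xt k‖) atTop (𝓝 0) := by
    have h2 : Tendsto (fun k => Real.sqrt (‖z k - xt k‖ ^ 2)) atTop (𝓝 (Real.sqrt 0)) :=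
      (Real.continuous_sqrt.tendsto 0).comp htend0
    have h3 : (fun k => Real.sqrt (‖z k - xt k‖ ^ 2)) = fun k => ‖z k - xt k‖ := by
      funext k; exact Real.sqrt_sq (norm_nonneg _)
    rw [h3, Real.sqrt_zero] at h2
    exact h2
  have htend2 : Tendsto (fun k => z k - xt k) atTop (𝓝 0) :=
    tendsto_zero_iff_norm_tendsto_zero.mpr htend1
  refine ⟨hsummable, ?_, htend2, ?_⟩
  · rw [hD]
    exact Summable.tsum_le_of_sum_range_le hsummable hbound
  · have heq2 : (fun k => z (k + 1) - z k) = fun k => (-w) • (z k - xt k) := by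
      funext k
      rw [hrec k]
      module
    rw [heq2]
    have h4 := htend2.const_smul (-w)
    simpa using h4
end

section
/- Let X, Y₁, Y₂ be finite-dimensional real inner product spaces, K₁ : X → Y₁ and K₂ : X → Y₂ bounded linear maps with adjoints K₁*, K₂*, and let t, s₁, s₂, λ > 0 and L₁ ≥ ‖K₁‖, L₂ ≥ ‖K₂‖. If 1 > (1 + λ)·t·s₁·L₁² and 1 > (1 + λ⁻¹)·t·s₂·L₂², then for every (y₁, y₂) ∈ Y₁ × Y₂ with (y₁, y₂) ≠ 0 one has t·‖√s₁·K₁*y₁ + √s₂·K₂*y₂‖² < ‖y₁‖² + ‖y₂‖² (the step-length condition Id > tΣ^{1/2}KK*Σ^{1/2} of (3.2), established via Young's inequality). -/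
open scoped RealInnerProductSpace

set_option maxHeartbeats 1000000 in
/-- The step-length condition (3.2): under the Young-inequality bounds
`1 > (1 + λ)ts₁L₁²` and `1 > (1 + λ⁻¹)ts₂L₂²`, for every nonzero `(y₁, y₂)` one has
`t‖√s₁·K₁*y₁ + √s₂·K₂*y₂‖² < ‖y₁‖² + ‖y₂‖²`. -/
theorem stmt_10 {X Y₁ Y₂ : Type*}
    [NormedAddCommGroup X] [InnerProductSpace ℝ X] [FiniteDimensional ℝ X]
    [NormedAddCommGroup Y₁] [InnerProductSpace ℝ Y₁] [FiniteDimensional ℝ Y₁]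
    [NormedAddCommGroup Y₂] [InnerProductSpace ℝ Y₂] [FiniteDimensional ℝ Y₂]
    (K₁ : X →L[ℝ] Y₁) (K₂ : X →L[ℝ] Y₂)
    (t s₁ s₂ lam L₁ L₂ : ℝ)
    (ht : 0 < t) (hs₁ : 0 < s₁) (hs₂ : 0 < s₂) (hlam : 0 < lam)
    (hL₁ : ‖K₁‖ ≤ L₁) (hL₂ : ‖K₂‖ ≤ L₂)
    (h1 : (1 + lam) * t * s₁ * L₁ ^ 2 < 1)
    (h2 : (1 + lam⁻¹) * t * s₂ * L₂ ^ 2 < 1) :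
    ∀ (y₁ : Y₁) (y₂ : Y₂), (y₁, y₂) ≠ (0, 0) →
      t * ‖Real.sqrt s₁ • (ContinuousLinearMap.adjoint K₁) y₁ +
            Real.sqrt s₂ • (ContinuousLinearMap.adjoint K₂) y₂‖ ^ 2
        < ‖y₁‖ ^ 2 + ‖y₂‖ ^ 2 := by
  intro y₁ y₂ hy
  set a := Real.sqrt s₁ • (ContinuousLinearMap.adjoint K₁) y₁ with ha
  set b := Real.sqrt s₂ • (ContinuousLinearMap.adjoint K₂) y₂ with hb
  clear_value a b
  have hL₁0 : 0 ≤ L₁ := le_trans (norm_nonneg _) hL₁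
  have hL₂0 : 0 ≤ L₂ := le_trans (norm_nonneg _) hL₂
  have hK₁ : ‖(ContinuousLinearMap.adjoint K₁) y₁‖ ≤ L₁ * ‖y₁‖ := by
    calc ‖(ContinuousLinearMap.adjoint K₁) y₁‖ ≤ ‖ContinuousLinearMap.adjoint K₁‖ * ‖y₁‖ :=
          (ContinuousLinearMap.adjoint K₁).le_opNorm y₁
      _ ≤ L₁ * ‖y₁‖ := by
          rw [LinearIsometryEquiv.norm_map ContinuousLinearMap.adjoint K₁]
          exact mul_le_mul_of_nonneg_right hL₁ (norm_nonneg _)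
  have hK₂ : ‖(ContinuousLinearMap.adjoint K₂) y₂‖ ≤ L₂ * ‖y₂‖ := by
    calc ‖(ContinuousLinearMap.adjoint K₂) y₂‖ ≤ ‖ContinuousLinearMap.adjoint K₂‖ * ‖y₂‖ :=
          (ContinuousLinearMap.adjoint K₂).le_opNorm y₂
      _ ≤ L₂ * ‖y₂‖ := by
          rw [LinearIsometryEquiv.norm_map ContinuousLinearMap.adjoint K₂]
          exact mul_le_mul_of_nonneg_right hL₂ (norm_nonneg _)
  have ha2 : ‖a‖ ^ 2 ≤ s₁ * (L₁ * ‖y₁‖) ^ 2 := by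
    have h : ‖a‖ = Real.sqrt s₁ * ‖(ContinuousLinearMap.adjoint K₁) y₁‖ := by
      rw [ha, norm_smul, Real.norm_eq_abs, abs_of_nonneg (Real.sqrt_nonneg _)]
    rw [h, mul_pow, Real.sq_sqrt hs₁.le]
    exact mul_le_mul_of_nonneg_left
      (pow_le_pow_left₀ (norm_nonneg _) hK₁ 2) hs₁.le
  have hb2 : ‖b‖ ^ 2 ≤ s₂ * (L₂ * ‖y₂‖) ^ 2 := by
    have h : ‖b‖ = Real.sqrt s₂ * ‖(ContinuousLinearMap.adjoint K₂) y₂‖ := by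
      rw [hb, norm_smul, Real.norm_eq_abs, abs_of_nonneg (Real.sqrt_nonneg _)]
    rw [h, mul_pow, Real.sq_sqrt hs₂.le]
    exact mul_le_mul_of_nonneg_left
      (pow_le_pow_left₀ (norm_nonneg _) hK₂ 2) hs₂.le
  have hab : ‖a + b‖ ≤ ‖a‖ + ‖b‖ := norm_add_le a b
  -- Young: ‖a+b‖² ≤ (1+λ)‖a‖² + (1+λ⁻¹)‖b‖²
  have hyoung : ‖a + b‖ ^ 2 ≤ (1 + lam) * ‖a‖ ^ 2 + (1 + lam⁻¹) * ‖b‖ ^ 2 := by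
    have h2ab : 2 * ‖a‖ * ‖b‖ ≤ lam * ‖a‖ ^ 2 + lam⁻¹ * ‖b‖ ^ 2 := by
      have h1' : Real.sqrt lam ^ 2 = lam := Real.sq_sqrt hlam.le
      have h2' : Real.sqrt lam⁻¹ ^ 2 = lam⁻¹ := Real.sq_sqrt (inv_nonneg.mpr hlam.le)
      have h3' : Real.sqrt lam * Real.sqrt lam⁻¹ = 1 := by
        rw [← Real.sqrt_mul hlam.le, mul_inv_cancel₀ hlam.ne', Real.sqrt_one]
      have h4 := two_mul_le_add_sq (Real.sqrt lam * ‖a‖) (Real.sqrt lam⁻¹ * ‖b‖)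
      calc 2 * ‖a‖ * ‖b‖
          = 2 * (Real.sqrt lam * ‖a‖) * (Real.sqrt lam⁻¹ * ‖b‖) := by
            rw [show 2 * (Real.sqrt lam * ‖a‖) * (Real.sqrt lam⁻¹ * ‖b‖)
                = (Real.sqrt lam * Real.sqrt lam⁻¹) * (2 * ‖a‖ * ‖b‖) by ring, h3', one_mul]
        _ ≤ (Real.sqrt lam * ‖a‖) ^ 2 + (Real.sqrt lam⁻¹ * ‖b‖) ^ 2 := h4
        _ = lam * ‖a‖ ^ 2 + lam⁻¹ * ‖b‖ ^ 2 := by rw [mul_pow, mul_pow, h1', h2']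
    calc ‖a + b‖ ^ 2 ≤ (‖a‖ + ‖b‖) ^ 2 := by
          exact pow_le_pow_left₀ (norm_nonneg _) hab 2
      _ ≤ (1 + lam) * ‖a‖ ^ 2 + (1 + lam⁻¹) * ‖b‖ ^ 2 := by nlinarith
  have hne : y₁ ≠ 0 ∨ y₂ ≠ 0 := by
    by_contra h
    push_neg at h
    exact hy (by simp [h.1, h.2])
  have hy₁ : 0 ≤ ‖y₁‖ ^ 2 := sq_nonneg _
  have hy₂ : 0 ≤ ‖y₂‖ ^ 2 := sq_nonneg _
  have key : t * ‖a + b‖ ^ 2 ≤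
      ((1 + lam) * t * s₁ * L₁ ^ 2) * ‖y₁‖ ^ 2 + ((1 + lam⁻¹) * t * s₂ * L₂ ^ 2) * ‖y₂‖ ^ 2 := by
    have hl1 : 0 ≤ 1 + lam := by positivity
    have hl2 : 0 ≤ 1 + lam⁻¹ := by positivity
    have step1 := mul_le_mul_of_nonneg_left hyoung ht.le
    have step2 : t * ((1 + lam) * ‖a‖ ^ 2 + (1 + lam⁻¹) * ‖b‖ ^ 2)
        ≤ t * ((1 + lam) * (s₁ * (L₁ * ‖y₁‖) ^ 2) + (1 + lam⁻¹) * (s₂ * (L₂ * ‖y₂‖) ^ 2)) := by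
      gcongr
    refine step1.trans (step2.trans (le_of_eq ?_))
    ring
  have hpos : 0 < ‖y₁‖ ^ 2 ∨ 0 < ‖y₂‖ ^ 2 := by
    rcases hne with h | h
    · exact Or.inl (pow_pos (norm_pos_iff.mpr h) 2)
    · exact Or.inr (pow_pos (norm_pos_iff.mpr h) 2)
  have hc1 : 0 ≤ (1 + lam) * t * s₁ * L₁ ^ 2 := by positivity
  have hc2 : 0 ≤ (1 + lam⁻¹) * t * s₂ * L₂ ^ 2 := by positivity
  refine lt_of_le_of_lt key ?_
  rcases hpos with h | h
  · nlinarith [mul_le_mul_of_nonneg_right h2.le hy₂, mul_lt_mul_of_pos_right h1 h]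
  · nlinarith [mul_le_mul_of_nonneg_right h1.le hy₁, mul_lt_mul_of_pos_right h2 h]
end

section
/- (Lemma A.1, single-step version.) Let z, x̃ ∈ ℝ^N with F(z) < ∞, let ρ, β > 0, let Γ : ℝ^N → ℝ^N be a self-adjoint linear map with ⟨v, (A'(z)* ∘ A'(z) + Γ)v⟩ ≥ (2ρ + β)‖v‖² for all v ∈ ℝ^N, and let e ∈ ℝ^N with ‖e‖ ≤ ρ‖x̃ − z‖. Define A_z(x) := A(z) + A'(z)(x − z) and J_z(x) := (1/2)‖A_z(x)‖² + F(x). If q := e − A'(z)*(A(z) + A'(z)(x̃ − z)) satisfies the second-order subgradient inequality F(z) − F(x̃) ≥ ⟨q, z − x̃⟩ + (1/2)⟨z − x̃, Γ(z − x̃)⟩, then J(z) − J_z(x̃) ≥ (β/2)‖x̃ − z‖². -/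
open scoped RealInnerProductSpace

/-- Lemma A.1 (single-step version): under the second-order subgradient inequality with
an operator `Γ` satisfying `A'(z)*A'(z) + Γ ≥ (2ρ + β)Id`, the descent inequality (2.4)
`J(z) − J_z(x̃) ≥ (β/2)‖x̃ − z‖²` holds even with zero proximal parameter. -/
theorem stmt_11 {N M : ℕ}
    (F : EuclideanSpace ℝ (Fin N) → EReal)
    (A : EuclideanSpace ℝ (Fin N) → EuclideanSpace ℝ (Fin M))
    (A' : EuclideanSpace ℝ (Fin N) → (EuclideanSpace ℝ (Fin N) →L[ℝ] EuclideanSpace ℝ (Fin M)))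
    (hFconv : ∀ x y : EuclideanSpace ℝ (Fin N), ∀ a b : ℝ, 0 ≤ a → 0 ≤ b → a + b = 1 →
      F (a • x + b • y) ≤ (a : EReal) * F x + (b : EReal) * F y)
    (hFproper : ∃ x, F x ≠ ⊤)
    (hFnebot : ∀ x, F x ≠ ⊥)
    (hFlsc : LowerSemicontinuous F)
    (hA : ∀ x, HasFDerivAt A (A' x) x)
    (hA'cont : Continuous A')
    (z xt : EuclideanSpace ℝ (Fin N)) (hz : F z < ⊤)
    (ρ β : ℝ) (hρ : 0 < ρ) (hβ : 0 < β)
    (Γ : EuclideanSpace ℝ (Fin N) →L[ℝ] EuclideanSpace ℝ (Fin N))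
    (hΓsym : ∀ u v, ⟪Γ u, v⟫ = ⟪u, Γ v⟫)
    (hΓpos : ∀ v : EuclideanSpace ℝ (Fin N),
      (2 * ρ + β) * ‖v‖ ^ 2 ≤ ⟪v, (ContinuousLinearMap.adjoint (A' z)) ((A' z) v) + Γ v⟫)
    (e : EuclideanSpace ℝ (Fin N)) (he : ‖e‖ ≤ ρ * ‖xt - z‖)
    (q : EuclideanSpace ℝ (Fin N))
    (hq : q = e - (ContinuousLinearMap.adjoint (A' z)) (A z + (A' z) (xt - z)))
    (hsubgrad : F xt + ((⟪q, z - xt⟫ + 1 / 2 * ⟪z - xt, Γ (z - xt)⟫ : ℝ) : EReal) ≤ F z) :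
    Jlin F A A' z xt + ((β / 2 * ‖xt - z‖ ^ 2 : ℝ) : EReal) ≤ Jobj F A z := by

  -- F xt is finite
  have hxt_top : F xt ≠ ⊤ := by
    intro h
    rw [h, EReal.top_add_coe] at hsubgrad
    exact absurd (lt_of_le_of_lt hsubgrad hz) (lt_irrefl _)
  obtain ⟨fz, hfz⟩ : ∃ r : ℝ, F z = (r : EReal) :=
    ⟨(F z).toReal, (EReal.coe_toReal hz.ne (hFnebot z)).symm⟩
  obtain ⟨fx, hfx⟩ : ∃ r : ℝ, F xt = (r : EReal) :=
    ⟨(F xt).toReal, (EReal.coe_toReal hxt_top (hFnebot xt)).symm⟩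
  have hsub : fx + (⟪q, z - xt⟫ + 1 / 2 * ⟪z - xt, Γ (z - xt)⟫) ≤ fz := by
    rw [hfz, hfx, ← EReal.coe_add, EReal.coe_le_coe_iff] at hsubgrad
    exact hsubgrad
  rw [Jlin, Jobj, hfz, hfx, ← EReal.coe_add, ← EReal.coe_add, ← EReal.coe_add,
    EReal.coe_le_coe_iff]
  set v := xt - z with hv
  have hΓsymv : ⟪z - xt, Γ (z - xt)⟫ = ⟪v, Γ v⟫ := by
    have : z - xt = -v := by rw [hv]; abel
    rw [this, map_neg, inner_neg_neg]
  have hqv : ⟪q, z - xt⟫ = -⟪e, v⟫ + ⟪A z, A' z v⟫ + ‖A' z v‖ ^ 2 := by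
    have hzv : z - xt = -v := by rw [hv]; abel
    rw [hq, hzv, inner_neg_right, inner_sub_left,
      ContinuousLinearMap.adjoint_inner_left, inner_add_left]
    have : ⟪(A' z) v, (A' z) v⟫ = ‖(A' z) v‖ ^ 2 := real_inner_self_eq_norm_sq _
    rw [this]; ring
  have h1 : (2 * ρ + β) * ‖v‖ ^ 2 ≤ ‖A' z v‖ ^ 2 + ⟪v, Γ v⟫ := by
    have := hΓpos v
    rwa [inner_add_right, ContinuousLinearMap.adjoint_inner_right,
      real_inner_self_eq_norm_sq] at this
  have h2 : ⟪e, v⟫ ≤ ρ * ‖v‖ ^ 2 := by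
    calc ⟪e, v⟫ ≤ ‖e‖ * ‖v‖ := real_inner_le_norm e v
    _ ≤ ρ * ‖v‖ * ‖v‖ := mul_le_mul_of_nonneg_right he (norm_nonneg v)
    _ = ρ * ‖v‖ ^ 2 := by ring
  have hnorm : ‖Alin A A' z xt‖ ^ 2 = ‖A z‖ ^ 2 + 2 * ⟪A z, A' z v⟫ + ‖A' z v‖ ^ 2 := by
    rw [Alin, ← hv]
    exact norm_add_sq_real _ _
  rw [hqv, hΓsymv] at hsub
  nlinarith [hsub, h1, h2, hnorm]
end

section
/- (Quadratic growth near a strong critical point; key claim in the proof of Theorem A.2.) Let x̂ ∈ ℝ^N with F(x̂) < ∞, let θ, ρ, C, 𝔡 > 0, A_max ≥ ‖A(x̂)‖ with sup_{z ∈ dom F}‖A(z)‖ ≤ A_max, and let Γ : ℝ^N → ℝ^N be self-adjoint with ⟨v, (A'(x̂)* ∘ A'(x̂) + Γ)v⟩ ≥ (2ρ + θ)‖v‖² for all v. Suppose q̂ := −A'(x̂)*A(x̂) satisfies F(z) − F(x̂) ≥ ⟨q̂, z − x̂⟩ + (1/2)⟨z − x̂, Γ(z − x̂)⟩ for all z,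 and ‖A(z) − A(x̂) − A'(x̂)(z − x̂)‖ ≤ C‖z − x̂‖² for all z in the closed ball of radius 𝔡 around x̂. If C·A_max < ρ + θ/2, then there exist c > 0 and r'' ∈ (0, 𝔡] such that J(z) − J(x̂) ≥ c‖z − x̂‖² for all z ∈ B(x̂, r''). -/
open Metric
open scoped RealInnerProductSpace

private lemma stmt12_aux (θ ρ C Amax fx fz nAx nAz nE nD nL iAL iG iU : ℝ)
    (hC : 0 < C)
    (hE0 : 0 ≤ nE) (hD0 : 0 ≤ nD) (hAz0 : 0 ≤ nAz)
    (hAz : nAz ≤ Amax)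
    (herr : nE ≤ C * nD ^ 2)
    (hsub : fx + (-iAL + 1 / 2 * iG) ≤ fz)
    (hGamma : (2 * ρ + θ) * nD ^ 2 ≤ nL ^ 2 + iG)
    (h1 : nAz ^ 2 = nAx ^ 2 + 2 * iAL + nL ^ 2 + 2 * iU + nE ^ 2)
    (hip : -((nAz + nE) * nE) ≤ iU)
    (hCd : C ^ 2 * nD ^ 2 < (ρ + θ / 2 - C * Amax) / 2) :
    1 / 2 * nAx ^ 2 + fx + (ρ + θ / 2 - C * Amax) / 2 * nD ^ 2
      ≤ 1 / 2 * nAz ^ 2 + fz := by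
  have hAm0 : 0 ≤ Amax := le_trans hAz0 hAz
  have hprod : (nAz + nE) * nE ≤ (Amax + C * nD ^ 2) * (C * nD ^ 2) := by
    apply mul_le_mul (by linarith) herr hE0 (by positivity)
  have hquart : C ^ 2 * nD ^ 2 * nD ^ 2 ≤ (ρ + θ / 2 - C * Amax) / 2 * nD ^ 2 := by
    nlinarith [sq_nonneg nD]
  nlinarith [sq_nonneg nE, sq_nonneg nD]

/-- Quadratic growth of `J` near a strong critical point `x̂` (key claim in the proof of
Theorem A.2): there are `c > 0` and `r'' ∈ (0, 𝔡]` with `J(z) − J(x̂) ≥ c‖z − x̂‖²` on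
`B(x̂, r'')`. -/
theorem stmt_12 {N M : ℕ}
    (F : EuclideanSpace ℝ (Fin N) → EReal)
    (A : EuclideanSpace ℝ (Fin N) → EuclideanSpace ℝ (Fin M))
    (A' : EuclideanSpace ℝ (Fin N) → (EuclideanSpace ℝ (Fin N) →L[ℝ] EuclideanSpace ℝ (Fin M)))
    (hFconv : ∀ x y : EuclideanSpace ℝ (Fin N), ∀ a b : ℝ, 0 ≤ a → 0 ≤ b → a + b = 1 →
      F (a • x + b • y) ≤ (a : EReal) * F x + (b : EReal) * F y)
    (hFproper : ∃ x, F x ≠ ⊤)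
    (hFnebot : ∀ x, F x ≠ ⊥)
    (hFlsc : LowerSemicontinuous F)
    (hderiv : ∀ x, F x ≠ ⊤ → HasFDerivAt A (A' x) x)
    (hA'cont : ContinuousOn A' {x | F x ≠ ⊤})
    (xh : EuclideanSpace ℝ (Fin N)) (hxh : F xh < ⊤)
    (θ ρ C dd Amax : ℝ)
    (hθ : 0 < θ) (hρ : 0 < ρ) (hC : 0 < C) (hdd : 0 < dd)
    (hAmaxxh : ‖A xh‖ ≤ Amax)
    (hAmax : ∀ x, F x ≠ ⊤ → ‖A x‖ ≤ Amax)
    (Γ : EuclideanSpace ℝ (Fin N) →L[ℝ] EuclideanSpace ℝ (Fin N))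
    (hΓsym : ∀ u v, ⟪Γ u, v⟫ = ⟪u, Γ v⟫)
    (hΓpos : ∀ v : EuclideanSpace ℝ (Fin N),
      (2 * ρ + θ) * ‖v‖ ^ 2 ≤ ⟪v, (ContinuousLinearMap.adjoint (A' xh)) ((A' xh) v) + Γ v⟫)
    (hsubgrad : ∀ z, F xh +
      ((⟪-((ContinuousLinearMap.adjoint (A' xh)) (A xh)), z - xh⟫
          + 1 / 2 * ⟪z - xh, Γ (z - xh)⟫ : ℝ) : EReal) ≤ F z)
    (herr : ∀ z ∈ closedBall xh dd, ‖A z - (A xh + (A' xh) (z - xh))‖ ≤ C * ‖z - xh‖ ^ 2)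
    (hsmall : C * Amax < ρ + θ / 2) :
    ∃ c > (0 : ℝ), ∃ r'' > (0 : ℝ), r'' ≤ dd ∧
      ∀ z ∈ ball xh r'', Jobj F A xh + ((c * ‖z - xh‖ ^ 2 : ℝ) : EReal) ≤ Jobj F A z := by

  set κ := ρ + θ / 2 - C * Amax with hκdef
  have hκ : 0 < κ := by simp only [hκdef]; linarith
  have hr2pos : 0 < Real.sqrt (κ/2) / C := by positivity
  refine ⟨κ/2, by positivity, min dd (Real.sqrt (κ/2) / C), lt_min hdd hr2pos,
    min_le_left _ _, ?_⟩
  intro z hz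
  have hdist : ‖z - xh‖ < min dd (Real.sqrt (κ/2) / C) := by
    rw [← dist_eq_norm]; exact mem_ball.mp hz
  have hddz : z ∈ closedBall xh dd := by
    rw [mem_closedBall, dist_eq_norm]
    exact le_of_lt (lt_of_lt_of_le hdist (min_le_left _ _))
  by_cases hFz : F z = ⊤
  · have ht : Jobj F A z = ⊤ := by
      rw [Jobj, hFz]; exact EReal.coe_add_top _
    rw [ht]; exact le_top
  · have hFxt : F xh ≠ ⊤ := hxh.ne
    obtain ⟨fz, hfz⟩ : ∃ r : ℝ, F z = (r : EReal) :=
      ⟨(F z).toReal, (EReal.coe_toReal hFz (hFnebot z)).symm⟩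
    obtain ⟨fx, hfx⟩ : ∃ r : ℝ, F xh = (r : EReal) :=
      ⟨(F xh).toReal, (EReal.coe_toReal hFxt (hFnebot xh)).symm⟩
    have hsub := hsubgrad z
    rw [hfx, hfz] at hsub
    set d := z - xh with hd
    set e := A z - (A xh + (A' xh) d) with he
    have herr' : ‖e‖ ≤ C * ‖d‖ ^ 2 := herr z hddz
    have hAz : ‖A z‖ ≤ Amax := hAmax z hFz
    have hsub' : fx + (⟪-((ContinuousLinearMap.adjoint (A' xh)) (A xh)), d⟫
        + 1 / 2 * ⟪d, Γ d⟫) ≤ fz := by exact_mod_cast hsub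
    have hq : ⟪-((ContinuousLinearMap.adjoint (A' xh)) (A xh)), d⟫
        = -⟪A xh, (A' xh) d⟫ := by
      rw [inner_neg_left, ContinuousLinearMap.adjoint_inner_left]
    rw [hq] at hsub'
    have hGamma := hΓpos d
    rw [inner_add_right, ContinuousLinearMap.adjoint_inner_right,
      real_inner_self_eq_norm_sq] at hGamma
    have hAzdecomp : A z = (A xh + (A' xh) d) + e := by rw [he]; abel
    have h1 : ‖A z‖ ^ 2 = ‖A xh + (A' xh) d‖ ^ 2
        + 2 * ⟪A xh + (A' xh) d, e⟫ + ‖e‖ ^ 2 := by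
      rw [hAzdecomp]; exact norm_add_sq_real _ _
    have h2 : ‖A xh + (A' xh) d‖ ^ 2
        = ‖A xh‖ ^ 2 + 2 * ⟪A xh, (A' xh) d⟫ + ‖(A' xh) d‖ ^ 2 := norm_add_sq_real _ _
    have hu : A xh + (A' xh) d = A z - e := by rw [he]; abel
    have hules : ‖A xh + (A' xh) d‖ ≤ ‖A z‖ + ‖e‖ := by
      rw [hu]; exact norm_sub_le _ _
    have hipabs := abs_real_inner_le_norm (A xh + (A' xh) d) e
    have hip : -((‖A z‖ + ‖e‖) * ‖e‖) ≤ ⟪A xh + (A' xh) d, e⟫ := by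
      have hna := neg_abs_le (⟪A xh + (A' xh) d, e⟫)
      have hm : ‖A xh + (A' xh) d‖ * ‖e‖ ≤ (‖A z‖ + ‖e‖) * ‖e‖ :=
        mul_le_mul_of_nonneg_right hules (norm_nonneg e)
      linarith
    simp only [Jobj, hfx, hfz]
    have goalreal : 1 / 2 * ‖A xh‖ ^ 2 + fx + κ / 2 * ‖d‖ ^ 2
        ≤ 1 / 2 * ‖A z‖ ^ 2 + fz := by
      have hdsmall : ‖d‖ < Real.sqrt (κ/2) / C := lt_of_lt_of_le hdist (min_le_right _ _)
      have hCd : C ^ 2 * ‖d‖ ^ 2 < κ / 2 := by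
        have h4 : C * ‖d‖ < Real.sqrt (κ/2) := by
          rw [lt_div_iff₀ hC] at hdsmall; linarith [hdsmall]
        have h5 : (C * ‖d‖) ^ 2 < Real.sqrt (κ/2) ^ 2 :=
          pow_lt_pow_left₀ h4 (by positivity) two_ne_zero
        rw [Real.sq_sqrt (by positivity : (0:ℝ) ≤ κ/2), mul_pow] at h5
        exact h5
      have h12 : ‖A z‖ ^ 2 = ‖A xh‖ ^ 2 + 2 * ⟪A xh, (A' xh) d⟫ + ‖(A' xh) d‖ ^ 2
          + 2 * ⟪A xh + (A' xh) d, e⟫ + ‖e‖ ^ 2 := by rw [h1, h2]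
      exact stmt12_aux θ ρ C Amax fx fz ‖A xh‖ ‖A z‖ ‖e‖ ‖d‖ ‖(A' xh) d‖
        (⟪A xh, (A' xh) d⟫) (⟪d, Γ d⟫) (⟪A xh + (A' xh) d, e⟫) hC
        (norm_nonneg _) (norm_nonneg _) (norm_nonneg _) hAz herr' hsub' hGamma h12 hip hCd
    calc (((1:ℝ) / 2 * ‖A xh‖ ^ 2 : ℝ) : EReal) + (fx : EReal) + ((κ / 2 * ‖d‖ ^ 2 : ℝ) : EReal)
        = (((1 / 2 * ‖A xh‖ ^ 2 + fx + κ / 2 * ‖d‖ ^ 2 : ℝ)) : EReal) := by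
          rw [← EReal.coe_add, ← EReal.coe_add]
      _ ≤ (((1 / 2 * ‖A z‖ ^ 2 + fz : ℝ)) : EReal) := EReal.coe_le_coe_iff.mpr goalreal
      _ = (((1:ℝ) / 2 * ‖A z‖ ^ 2 : ℝ) : EReal) + (fz : EReal) := by rw [← EReal.coe_add]
end

section
/- (Lemma A.3.) Let F : ℝⁿ → ℝ ∪ {+∞} be convex and let x ∈ ℝⁿ with F(x) < ∞. If q lies in the interior of the subdifferential ∂F(x) := {q' : F(z) ≥ F(x) + ⟨q', z − x⟩ for all z}, then for every γ > 0 there exists ρ > 0 such that F(z) − F(x) ≥ ⟨q, z − x⟩ + (γ/2)‖z − x‖² for all z ∈ B(x, ρ). -/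
open Metric
open scoped RealInnerProductSpace

/-- Lemma A.3: if `q` lies in the interior of the convex subdifferential `∂F(x)`, then
for every `γ > 0` there is `ρ > 0` such that
`F(z) − F(x) ≥ ⟨q, z − x⟩ + (γ/2)‖z − x‖²` for all `z ∈ B(x, ρ)`. -/
theorem stmt_14 {n : ℕ}
    (F : EuclideanSpace ℝ (Fin n) → EReal)
    (hFconv : ∀ x y : EuclideanSpace ℝ (Fin n), ∀ a b : ℝ, 0 ≤ a → 0 ≤ b → a + b = 1 →
      F (a • x + b • y) ≤ (a : EReal) * F x + (b : EReal) * F y)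
    (x : EuclideanSpace ℝ (Fin n)) (hx : F x < ⊤)
    (q : EuclideanSpace ℝ (Fin n))
    (hq : q ∈ interior {q' : EuclideanSpace ℝ (Fin n) |
      ∀ z, F x + ((⟪q', z - x⟫ : ℝ) : EReal) ≤ F z}) :
    ∀ γ > (0 : ℝ), ∃ ρ > (0 : ℝ), ∀ z ∈ ball x ρ,
      F x + ((⟪q, z - x⟫ + γ / 2 * ‖z - x‖ ^ 2 : ℝ) : EReal) ≤ F z := by
  intro γ hγ
  rw [mem_interior_iff_mem_nhds, Metric.mem_nhds_iff] at hq
  obtain ⟨ε, hε, hball⟩ := hq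
  refine ⟨ε / γ, by positivity, fun z hz => ?_⟩
  have hzx : ‖z - x‖ < ε / γ := by
    rw [mem_ball, dist_eq_norm] at hz; exact hz
  have hmem : q + (γ / 2) • (z - x) ∈ ball q ε := by
    rw [mem_ball, dist_eq_norm]
    have : ‖q + (γ / 2) • (z - x) - q‖ = γ / 2 * ‖z - x‖ := by
      rw [add_sub_cancel_left, norm_smul, Real.norm_eq_abs,
        abs_of_pos (by positivity : (0:ℝ) < γ / 2)]
    rw [this]
    calc γ / 2 * ‖z - x‖ < γ / 2 * (ε / γ) :=
          mul_lt_mul_of_pos_left hzx (by positivity)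
      _ = ε / 2 := by field_simp
      _ < ε := by linarith
  have hsub := hball hmem z
  have hinner : (⟪q + (γ / 2) • (z - x), z - x⟫ : ℝ)
      = ⟪q, z - x⟫ + γ / 2 * ‖z - x‖ ^ 2 := by
    rw [inner_add_left, real_inner_smul_left, real_inner_self_eq_norm_sq]
  rwa [hinner] at hsub
end

section
/- (Remark 2.2: per-step decrease for general subadditive data terms.) Let g : ℝ^M → ℝ be convex, subadditive (g(a + b) ≤ g(a) + g(b) for all a, b), and Lipschitz, and define J_g(x) := g(A(x)) + F(x). Let z, x̃ ∈ ℝ^N with F(z) < ∞, let β, ε, C' > 0 and w ∈ (0, 1] with β ≥ 2wC' + ε, and set z' := (1 − w)z + w·x̃. Define A_z(x) := A(z) + A'(z)(x − z) and J̃_{g,z}(x) := g(A_z(x)) + F(x) + (β/2)‖x − z‖². If J̃_{g,z}(x̃) ≤ J̃_{g,z}(z) and g(A(z') − A_z(z')) ≤ C'‖z' − z‖², then J_g(z) − J_g(z') ≥ (wε/2)‖z − x̃‖². -/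
open scoped RealInnerProductSpace

/-- Remark 2.2: per-step sufficient decrease for a general convex, subadditive,
Lipschitz data term `g`, for the objective `J_g(x) = g(A(x)) + F(x)` and the relaxed
proximal Gauss–Newton step `z' = (1 − w)z + w·x̃`. -/
theorem stmt_17 {N M : ℕ}
    (F : EuclideanSpace ℝ (Fin N) → EReal)
    (A : EuclideanSpace ℝ (Fin N) → EuclideanSpace ℝ (Fin M))
    (A' : EuclideanSpace ℝ (Fin N) → (EuclideanSpace ℝ (Fin N) →L[ℝ] EuclideanSpace ℝ (Fin M)))
    (hFconv : ∀ x y : EuclideanSpace ℝ (Fin N), ∀ a b : ℝ, 0 ≤ a → 0 ≤ b → a + b = 1 →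
      F (a • x + b • y) ≤ (a : EReal) * F x + (b : EReal) * F y)
    (hFproper : ∃ x, F x ≠ ⊤)
    (hFnebot : ∀ x, F x ≠ ⊥)
    (hFlsc : LowerSemicontinuous F)
    (hA : ∀ x, HasFDerivAt A (A' x) x)
    (hA'cont : Continuous A')
    (g : EuclideanSpace ℝ (Fin M) → ℝ)
    (hgconv : ConvexOn ℝ Set.univ g)
    (hgsub : ∀ a b, g (a + b) ≤ g a + g b)
    (hglip : ∃ K : NNReal, LipschitzWith K g)
    (z xt : EuclideanSpace ℝ (Fin N)) (hz : F z < ⊤)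
    (β ε C' w : ℝ)
    (hβ : 0 < β) (hε : 0 < ε) (hC' : 0 < C')
    (hw : w ∈ Set.Ioc (0 : ℝ) 1)
    (hβw : 2 * w * C' + ε ≤ β)
    (z' : EuclideanSpace ℝ (Fin N)) (hz' : z' = (1 - w) • z + w • xt)
    (hdec : ((g (Alin A A' z xt) : ℝ) : EReal) + F xt + ((β / 2 * ‖xt - z‖ ^ 2 : ℝ) : EReal)
      ≤ ((g (Alin A A' z z) : ℝ) : EReal) + F z + ((β / 2 * ‖z - z‖ ^ 2 : ℝ) : EReal))
    (herr : g (A z' - Alin A A' z z') ≤ C' * ‖z' - z‖ ^ 2) :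
    ((g (A z') : ℝ) : EReal) + F z' + ((w * ε / 2 * ‖z - xt‖ ^ 2 : ℝ) : EReal)
      ≤ ((g (A z) : ℝ) : EReal) + F z := by

  obtain ⟨hw0, hw1⟩ := hw
  obtain ⟨fz, hfz⟩ : ∃ r : ℝ, F z = (r : EReal) :=
    ⟨(F z).toReal, (EReal.coe_toReal hz.ne (hFnebot z)).symm⟩
  -- F xt is finite
  have hxt_ne_top : F xt ≠ ⊤ := by
    intro h
    rw [h, hfz] at hdec
    rw [EReal.coe_add_top, EReal.top_add_coe, ← EReal.coe_add, ← EReal.coe_add] at hdec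
    exact (EReal.coe_lt_top _).not_ge hdec
  obtain ⟨fxt, hfxt⟩ : ∃ r : ℝ, F xt = (r : EReal) :=
    ⟨(F xt).toReal, (EReal.coe_toReal hxt_ne_top (hFnebot xt)).symm⟩
  rw [hfz, hfxt] at hdec
  have hdecR : g (Alin A A' z xt) + fxt + β / 2 * ‖xt - z‖ ^ 2
      ≤ g (Alin A A' z z) + fz + β / 2 * ‖z - z‖ ^ 2 := by exact_mod_cast hdec
  rw [sub_self, norm_zero] at hdecR
  have hAzz : Alin A A' z z = A z := by simp [Alin]
  rw [hAzz] at hdecR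
  -- vector identities
  have hvec : z' - z = w • (xt - z) := by rw [hz']; module
  have hnorm : ‖z' - z‖ = w * ‖xt - z‖ := by
    rw [hvec, norm_smul, Real.norm_eq_abs, abs_of_pos hw0]
  have hAffine : Alin A A' z z' = (1 - w) • Alin A A' z z + w • Alin A A' z xt := by
    simp only [Alin]
    have h1 : z' - z = w • (xt - z) := hvec
    rw [h1, map_smul]
    rw [sub_self, map_zero]
    module
  -- convexity of g ∘ Alin
  have hgc : g (Alin A A' z z') ≤ (1 - w) * g (Alin A A' z z) + w * g (Alin A A' z xt) := by
    rw [hAffine]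
    exact hgconv.2 (Set.mem_univ _) (Set.mem_univ _) (by linarith) hw0.le (by ring)
  rw [hAzz] at hgc
  -- subadditivity
  have hsplit : g (A z') ≤ g (Alin A A' z z') + g (A z' - Alin A A' z z') := by
    have : A z' = Alin A A' z z' + (A z' - Alin A A' z z') := by abel
    calc g (A z') = g (Alin A A' z z' + (A z' - Alin A A' z z')) := by rw [← this]
      _ ≤ _ := hgsub _ _
  -- F convexity at z'
  have hFz' : F z' ≤ (((1 - w) * fz + w * fxt : ℝ) : EReal) := by
    have := hFconv z xt (1 - w) w (by linarith) hw0.le (by ring)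
    rw [← hz', hfz, hfxt] at this
    calc F z' ≤ ((1 - w : ℝ) : EReal) * (fz : EReal) + (w : ℝ) * (fxt : EReal) := this
      _ = (((1 - w) * fz + w * fxt : ℝ) : EReal) := by
          rw [← EReal.coe_mul, ← EReal.coe_mul, ← EReal.coe_add]
  -- real inequality
  have hnn : (0:ℝ) ≤ ‖xt - z‖ ^ 2 := by positivity
  have hzxt : ‖z - xt‖ = ‖xt - z‖ := by rw [← norm_neg]; congr 1; abel
  have hreal : g (A z') + ((1 - w) * fz + w * fxt) + w * ε / 2 * ‖z - xt‖ ^ 2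
      ≤ g (A z) + fz := by
    have h1 : g (A z') ≤ (1 - w) * g (A z) + w * g (Alin A A' z xt) + C' * (w * ‖xt - z‖) ^ 2 := by
      calc g (A z') ≤ g (Alin A A' z z') + g (A z' - Alin A A' z z') := hsplit
        _ ≤ ((1 - w) * g (A z) + w * g (Alin A A' z xt)) + C' * ‖z' - z‖ ^ 2 :=
            add_le_add hgc herr
        _ = _ := by rw [hnorm]
    rw [hzxt]
    nlinarith [mul_le_mul_of_nonneg_left hdecR hw0.le, sq_nonneg (‖xt - z‖)]
  -- conclude
  rw [hfz]
  calc ((g (A z') : ℝ) : EReal) + F z' + ((w * ε / 2 * ‖z - xt‖ ^ 2 : ℝ) : EReal)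
      ≤ ((g (A z') : ℝ) : EReal) + (((1 - w) * fz + w * fxt : ℝ) : EReal)
          + ((w * ε / 2 * ‖z - xt‖ ^ 2 : ℝ) : EReal) := by gcongr
    _ = ((g (A z') + ((1 - w) * fz + w * fxt) + w * ε / 2 * ‖z - xt‖ ^ 2 : ℝ) : EReal) := by
        norm_cast
    _ ≤ ((g (A z) + fz : ℝ) : EReal) := by exact_mod_cast hreal
    _ = ((g (A z) : ℝ) : EReal) + (fz : EReal) := by rw [EReal.coe_add]
end
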